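/- arXiv:1308.4060 — 11 statements merged into one kernel-verified Lean document; each statement's English description precedes it below -/
import Mathlib

section
/- Let n, n′, k, ℓ_μ, ℓ_id be natural numbers with n ≥ 2, ℓ_μ ≥ 1, satisfying the heteromorphism arity equations k = ℓ_μ + ℓ_id and k·n′ = n·ℓ_μ + ℓ_id. Then 2 ≤ n′ ≤ n; moreover n′ = n if and only if ℓ_id = 0. In particular, a heteromorphism always decreases (never increases) the arity of the polyadic multiplication. -/
/-! Substituting `k = ℓμ + ℓid` turns the arity equation into the balance
`ℓμ (n - n') = ℓid (n' - 1)`. The cases `n' = 0` and `n' = 1` are impossible since `n ℓμ ≥ 2`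
and `n ≥ 2`; for `n' ≥ 2` the right-hand side is nonnegative and vanishes exactly when
`ℓid = 0`, while `ℓμ > 0` makes the left-hand side vanish exactly when `n' = n`. -/

section ArityEquation

variable {n n' lmu lid : ℕ}

theorem arity_balance (harity : (lmu + lid) * n' = n * lmu + lid) :
    (lmu : ℤ) * (n - n') = lid * (n' - 1) := by
  have h : ((lmu + lid) * n' : ℤ) = n * lmu + lid := by exact_mod_cast harity
  linear_combination -h

theorem two_le_final_arity (hn : 2 ≤ n) (hlmu : 1 ≤ lmu)
    (harity : (lmu + lid) * n' = n * lmu + lid) : 2 ≤ n' := by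
  rcases n' with _ | _ | n'
  · nlinarith
  · nlinarith
  · omega

theorem final_arity_le (hlmu : 1 ≤ lmu) (hn' : 2 ≤ n')
    (harity : (lmu + lid) * n' = n * lmu + lid) : n' ≤ n := by
  have hbal := arity_balance harity
  have : (0 : ℤ) ≤ lmu * (n - n') := hbal ▸ mul_nonneg (by positivity) (by omega)
  have : (0 : ℤ) ≤ n - n' := nonneg_of_mul_nonneg_right this (by positivity)
  omega

theorem final_arity_eq_iff (hlmu : 1 ≤ lmu) (hn' : 2 ≤ n')
    (harity : (lmu + lid) * n' = n * lmu + lid) : n' = n ↔ lid = 0 := by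
  have hbal := arity_balance harity
  have hlmu' : (lmu : ℤ) ≠ 0 := by positivity
  have hn'' : (n' : ℤ) - 1 ≠ 0 := by omega
  constructor
  · rintro rfl
    simpa [hn''] using hbal.symm
  · rintro rfl
    have : (n : ℤ) - n' = 0 := (mul_eq_zero.mp (by simpa using hbal)).resolve_left hlmu'
    omega

end ArityEquation

/-- For a `k`-place heteromorphism with `ℓμ` multiplications and `ℓid` intact
elements, the arity equations force `2 ≤ n' ≤ n`, with `n' = n` iff `ℓid = 0`:
a heteromorphism always decreases (never increases) the arity. -/
theorem heteromorphism_decreases_arity (n n' k lmu lid : ℕ)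
    (hn : 2 ≤ n) (hlmu : 1 ≤ lmu)
    (hplaces : k = lmu + lid) (harity : k * n' = n * lmu + lid) :
    2 ≤ n' ∧ n' ≤ n ∧ (n' = n ↔ lid = 0) := by
  subst hplaces
  have hn' := two_le_final_arity hn hlmu harity
  exact ⟨hn', final_arity_le hlmu hn' harity, final_arity_eq_iff hlmu hn' harity⟩
end

section
/- Let n, n′, k, ℓ_μ, ℓ_id be natural numbers with n ≥ 2, ℓ_μ ≥ 1, satisfying k = ℓ_μ + ℓ_id and k·n′ = n·ℓ_μ + ℓ_id. Then the arity changing formulas hold: k·(n′ − 1) = (n − 1)·ℓ_μ and ℓ_id·(n′ − 1) = (n − n′)·ℓ_μ; consequently ℓ_μ ≤ k ≤ (n − 1)·ℓ_μ, with k = ℓ_μ exactly when n′ = n (multiplace homomorphism) and k = (n − 1)·ℓ_μ exactly when n′ = 2 (binarizing heteromorphism). -/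
/-!
Subtracting the two arity equations gives `k (n' - 1) = (n - 1) ℓμ`, and subtracting
`ℓμ (n' - 1)` from it gives `ℓid (n' - 1) = (n - n') ℓμ`. Since `(n - 1) ℓμ > 0`, the first
forces `n' ≥ 2`, so `k ≤ k (n' - 1) = (n - 1) ℓμ`; the two equality cases are cancellations in
`k (n' - 1) = (n - 1) ℓμ`: `k = ℓμ` iff `n' - 1 = n - 1`, and `k = (n - 1) ℓμ` iff `n' - 1 = 1`.
-/

section CancelMonoidWithZero

variable {M₀ : Type*} [CommMonoidWithZero M₀] [IsCancelMulZero M₀] {k a b m : M₀}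

theorem eq_iff_eq_of_mul_eq_mul₀ (h : k * a = m * b) (hm : m ≠ 0) (hb : b ≠ 0) :
    k = m ↔ a = b := by
  constructor
  · rintro rfl
    exact mul_left_cancel₀ hm h
  · rintro rfl
    exact mul_right_cancel₀ hb h

theorem eq_mul_iff_of_mul_eq_mul (h : k * a = b * m) (hk : k ≠ 0) : k = b * m ↔ a = 1 := by
  rw [← h, eq_comm, mul_eq_left₀ hk]

end CancelMonoidWithZero

namespace Heteromorphism

variable {n n' k lmu lid : ℕ}

theorem places_mul_pred_eq (hplaces : k = lmu + lid) (harity : k * n' = n * lmu + lid) :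
    k * (n' - 1) = (n - 1) * lmu := by
  rw [Nat.mul_sub_one, harity, hplaces, Nat.sub_one_mul]
  omega

theorem intact_mul_pred_eq (hplaces : k = lmu + lid) (harity : k * n' = n * lmu + lid) :
    lid * (n' - 1) = (n - n') * lmu := by
  rw [hplaces, add_mul, mul_comm lmu n'] at harity
  rw [Nat.mul_sub_one, Nat.sub_mul]
  omega

theorem two_le_final_arity (hn : 2 ≤ n) (hlmu : 1 ≤ lmu) (hpred : k * (n' - 1) = (n - 1) * lmu) :
    2 ≤ n' := by
  have hpred_ne_zero : n' - 1 ≠ 0 := by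
    rintro hzero
    rw [hzero, mul_zero] at hpred
    exact Nat.mul_ne_zero (by omega) (by omega) hpred.symm
  omega

end Heteromorphism

/-- The arity changing formulas for heteromorphisms: `k (n'-1) = (n-1) ℓμ` and
`ℓid (n'-1) = (n-n') ℓμ`; consequently `ℓμ ≤ k ≤ (n-1) ℓμ`, with `k = ℓμ`
exactly for multiplace homomorphisms (`n' = n`) and `k = (n-1) ℓμ` exactly for
binarizing heteromorphisms (`n' = 2`). -/
theorem arity_changing_formulas (n n' k lmu lid : ℕ)
    (hn : 2 ≤ n) (hlmu : 1 ≤ lmu)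
    (hplaces : k = lmu + lid) (harity : k * n' = n * lmu + lid) :
    k * (n' - 1) = (n - 1) * lmu ∧
    lid * (n' - 1) = (n - n') * lmu ∧
    lmu ≤ k ∧ k ≤ (n - 1) * lmu ∧
    (k = lmu ↔ n' = n) ∧
    (k = (n - 1) * lmu ↔ n' = 2) := by
  have hpred := Heteromorphism.places_mul_pred_eq hplaces harity
  have hn' := Heteromorphism.two_le_final_arity hn hlmu hpred
  refine ⟨hpred, Heteromorphism.intact_mul_pred_eq hplaces harity, by omega, ?_, ?_, ?_⟩
  · calc k ≤ k * (n' - 1) := Nat.le_mul_of_pos_right k (by omega)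
      _ = (n - 1) * lmu := hpred
  · rw [eq_iff_eq_of_mul_eq_mul₀ (hpred.trans (mul_comm _ _)) (by omega) (by omega)]
    omega
  · rw [eq_mul_iff_of_mul_eq_mul hpred (by omega)]
    omega
end

section
/- Let n ≥ 2 and let μ : G^n → G be a totally associative n-ary operation on a set G. Define a binary operation ∗ on the set G^{n−1} of (n−1)-tuples by x ∗ y = (μ[x₁, …, x_{n−1}, y₁], y₂, …, y_{n−1}). Then ∗ is associative, so ⟨G^{n−1}, ∗⟩ is a semigroup; thus any n-ary semigroup can be mapped into a binary semigroup by the binarizing heteromorphism with k = n − 1 places, ℓ_μ = 1 multiplication and ℓ_id = n − 2 intact elements (the identity map on G^{n−1}). -/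
/-- Composition of an `n`-ary operation `μ` with itself: in the outer product,
the inner multiplication `μ` is placed at position `i` (0-indexed), acting on
entries `i, …, i+n-1` of the `(2n-1)`-tuple `t`. -/
def polyComp {G : Type*} (n : ℕ) (μ : (Fin n → G) → G) (i : ℕ) (t : ℕ → G) : G :=
  μ (fun j => if j.val < i then t j.val
      else if j.val = i then μ (fun l => t (i + l.val))
      else t (j.val + n - 1))

/-- The binary operation on `(n-1)`-tuples given by the binarizing
heteromorphism: `x ∗ y = (μ[x₁, …, x_{n-1}, y₁], y₂, …, y_{n-1})`. -/
def binOp {G : Type*} (n : ℕ) (μ : (Fin n → G) → G)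
    (x y : Fin (n - 1) → G) : Fin (n - 1) → G :=
  fun j =>
    if j.val = 0 then
      μ (fun l => if hl : l.val < n - 1 then x ⟨l.val, hl⟩
          else y ⟨0, Nat.lt_of_le_of_lt (Nat.zero_le _) j.isLt⟩)
    else y j

/-!
In the first coordinate, `(x ∗ y) ∗ z` and `x ∗ (y ∗ z)` are the two extreme bracketings
`μ[μ[…], …]` and `μ[…, μ[…]]` of the `(2n-1)`-tuple `x₁, …, x_{n-1}, y₁, …, y_{n-1}, z₁`,
which agree by total associativity; every other coordinate of both sides is that of `z`.
-/

section

variable {G : Type*}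

def concatThree {m : ℕ} (x y : Fin m → G) (c : G) (k : ℕ) : G :=
  if h : k < m then x ⟨k, h⟩ else if h' : k - m < m then y ⟨k - m, h'⟩ else c

variable {m : ℕ} (x y : Fin m → G) (c : G)

theorem concatThree_of_lt {k : ℕ} (h : k < m) : concatThree x y c k = x ⟨k, h⟩ :=
  dif_pos h

theorem concatThree_add_left {k : ℕ} (h : k < m) : concatThree x y c (m + k) = y ⟨k, h⟩ := by
  simp [concatThree, h]

theorem concatThree_of_le {k : ℕ} (h : 2 * m ≤ k) : concatThree x y c k = c := by
  rw [concatThree, dif_neg (by omega), dif_neg (by omega)]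

end

section

variable {G : Type*} {n : ℕ} (μ : (Fin n → G) → G) (x y z : Fin (n - 1) → G)

theorem binOp_apply_of_ne_zero {j : Fin (n - 1)} (hj : j.val ≠ 0) : binOp n μ x y j = y j :=
  if_neg hj

theorem binOp_binOp_apply_zero_left (h : 0 < n - 1) :
    binOp n μ (binOp n μ x y) z ⟨0, h⟩ = polyComp n μ 0 (concatThree x y (z ⟨0, h⟩)) := by
  simp only [binOp, polyComp, if_true, Nat.not_lt_zero, if_false, Nat.zero_add]
  congr 1
  funext l
  split_ifs with hl hl0 hl0
  · congr 1
    funext k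
    split_ifs with hk
    · exact (concatThree_of_lt _ _ _ hk).symm
    · rw [show k.val = (n - 1) + 0 by omega, concatThree_add_left _ _ _ h]
  · rw [show l.val + n - 1 = (n - 1) + l.val by omega, concatThree_add_left _ _ _ hl]
  · omega
  · rw [concatThree_of_le _ _ _ (by omega)]

theorem binOp_binOp_apply_zero_right (h : 0 < n - 1) :
    binOp n μ x (binOp n μ y z) ⟨0, h⟩ =
      polyComp n μ (n - 1) (concatThree x y (z ⟨0, h⟩)) := by
  simp only [binOp, polyComp, if_true]
  congr 1
  funext l
  split_ifs with hl hl
  · exact (concatThree_of_lt _ _ _ hl).symm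
  · congr 1
    funext k
    split_ifs with hk
    · exact (concatThree_add_left _ _ _ hk).symm
    · rw [concatThree_of_le _ _ _ (by omega)]
  · omega

end

theorem binarizing_heteromorphism_semigroup_general {G : Type*} (n : ℕ)
    (μ : (Fin n → G) → G)
    (hassoc : ∀ i j : ℕ, i ≤ n - 1 → j ≤ n - 1 → ∀ t : ℕ → G,
      polyComp n μ i t = polyComp n μ j t) :
    ∀ x y z : Fin (n - 1) → G,
      binOp n μ (binOp n μ x y) z = binOp n μ x (binOp n μ y z) := by
  intro x y z
  funext ⟨j, hj⟩
  rcases j with _ | k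
  · rw [binOp_binOp_apply_zero_left, binOp_binOp_apply_zero_right,
      hassoc 0 (n - 1) (Nat.zero_le _) le_rfl]
  · simp only [binOp_apply_of_ne_zero μ _ _ (j := ⟨k + 1, hj⟩) k.succ_ne_zero]

/-- Any `n`-ary semigroup (totally associative `n`-ary operation) can be mapped
into a binary semigroup: the binarizing operation `∗` on `(n-1)`-tuples, with
`k = n-1` places, one multiplication and `n-2` intact elements, is associative. -/
theorem binarizing_heteromorphism_semigroup {G : Type*} (n : ℕ) (hn : 2 ≤ n)
    (μ : (Fin n → G) → G)
    (hassoc : ∀ i j : ℕ, i ≤ n - 1 → j ≤ n - 1 → ∀ t : ℕ → G,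
      polyComp n μ i t = polyComp n μ j t) :
    ∀ x y z : Fin (n - 1) → G,
      binOp n μ (binOp n μ x y) z = binOp n μ x (binOp n μ y z) :=
  binarizing_heteromorphism_semigroup_general n μ hassoc
end

section
/- Let μ : G³ → G be a totally associative ternary operation, written [abc]. Define a ternary operation μ′ on G × G by the Post-like associative quiver: μ′((g₁,h₁),(g₂,h₂),(g₃,h₃)) = ([g₁h₂g₃], [h₁g₂h₃]). Then μ′ is totally associative, i.e. ⟨G × G, μ′⟩ is a ternary semigroup (the diagonal ternary semigroup construction). -/
/-- The ternary operation on `G × G` given by the Post-like associative quiver: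
`μ′((g₁,h₁),(g₂,h₂),(g₃,h₃)) = ([g₁h₂g₃], [h₁g₂h₃])`. -/
def postProd {G : Type*} (m : G → G → G → G) :
    G × G → G × G → G × G → G × G :=
  fun p q r => (m p.1 q.2 r.1, m p.2 q.1 r.2)

/-- If `[abc]` is a totally associative ternary operation on `G`, then the
Post-like quiver operation `μ′` on `G × G` is totally associative, i.e.
`⟨G × G, μ′⟩` is a ternary semigroup (the diagonal ternary semigroup). -/
theorem postProd_totally_associative {G : Type*} (m : G → G → G → G)
    (hassoc : ∀ a b c d e : G,
      m (m a b c) d e = m a (m b c d) e ∧ m a (m b c d) e = m a b (m c d e)) :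
    ∀ p q r s t : G × G,
      postProd m (postProd m p q r) s t = postProd m p (postProd m q r s) t ∧
      postProd m p (postProd m q r s) t = postProd m p q (postProd m r s t) := by
  intro p q r s t
  -- each coordinate of a composite of `postProd m` is a composite of `m` on alternating coordinates
  have first := hassoc p.1 q.2 r.1 s.2 t.1
  have second := hassoc p.2 q.1 r.2 s.1 t.2
  exact ⟨Prod.ext first.1 second.1, Prod.ext first.2 second.2⟩
end

section
/- Let [abc] be a totally associative ternary operation on G which is semicommutative, i.e. [g t h] = [h t g] for all g, t, h ∈ G. Then the operation is medial: for every 3×3 matrix of elements g_{ij} ∈ G, [[g₁₁g₁₂g₁₃][g₂₁g₂₂g₂₃][g₃₁g₃₂g₃₃]] = [[g₁₁g₂₁g₃₁][g₁₂g₂₂g₃₂][g₁₃g₂₃g₃₃]]; that is, semicommutative ternary semigroups are medial. -/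
/-! In a totally associative ternary operation every product of an odd number of factors can be
bracketed to the right, and semicommutativity lets one exchange any two factors whose positions
have the same parity. Read row by row, the entry `gᵢⱼ` of a `3×3` matrix sits in position
`3(i - 1) + j`, whose parity `i + j + 1` is symmetric in `i` and `j`; so the product of the rows
and the product of the columns differ by a parity-preserving permutation of the factors. -/

section TernarySemigroup

variable {G : Type*} {m : G → G → G → G}

theorem ternary_nine_eq_rightNested
    (hassoc₁ : ∀ a b c d e : G, m (m a b c) d e = m a (m b c d) e)
    (hassoc₂ : ∀ a b c d e : G, m a (m b c d) e = m a b (m c d e))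
    (a b c d e f g h i : G) :
    m (m a b c) (m d e f) (m g h i) = m a b (m c d (m e f (m g h i))) := by
  rw [hassoc₁, hassoc₂, hassoc₂]

theorem ternary_swap_even_positions
    (hassoc₂ : ∀ a b c d e : G, m a (m b c d) e = m a b (m c d e))
    (hsemi : ∀ g t h : G, m g t h = m h t g) (p q r s t : G) :
    m p q (m r s t) = m p s (m r q t) := by
  rw [← hassoc₂, hsemi q, hassoc₂]

theorem ternary_swap_odd_positions
    (hassoc₁ : ∀ a b c d e : G, m (m a b c) d e = m a (m b c d) e)
    (hassoc₂ : ∀ a b c d e : G, m a (m b c d) e = m a b (m c d e))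
    (hsemi : ∀ g t h : G, m g t h = m h t g) (p q r s t : G) :
    m p q (m r s t) = m r q (m p s t) := by
  rw [← hassoc₂, ← hassoc₁, hsemi p, hassoc₁, hassoc₂]

end TernarySemigroup

/-- Semicommutative ternary semigroups are medial: if `[abc]` is totally
associative and `[g t h] = [h t g]` for all `g, t, h`, then the ternary product
of the rows of any `3×3` matrix equals the ternary product of the rows of its
transpose. -/
theorem semicommutative_ternary_semigroup_is_medial {G : Type*}
    (m : G → G → G → G)
    (hassoc : ∀ a b c d e : G,
      m (m a b c) d e = m a (m b c d) e ∧ m a (m b c d) e = m a b (m c d e))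
    (hsemi : ∀ g t h : G, m g t h = m h t g) :
    ∀ g11 g12 g13 g21 g22 g23 g31 g32 g33 : G,
      m (m g11 g12 g13) (m g21 g22 g23) (m g31 g32 g33) =
      m (m g11 g21 g31) (m g12 g22 g32) (m g13 g23 g33) := by
  have hassoc₁ a b c d e := (hassoc a b c d e).1
  have hassoc₂ a b c d e := (hassoc a b c d e).2
  have swap_even := ternary_swap_even_positions hassoc₂ hsemi
  have swap_odd := ternary_swap_odd_positions hassoc₁ hassoc₂ hsemi
  intro a b c d e f g h i
  rw [ternary_nine_eq_rightNested hassoc₁ hassoc₂, ternary_nine_eq_rightNested hassoc₁ hassoc₂]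
  calc m a b (m c d (m e f (m g h i)))
      = m a d (m c b (m e f (m g h i))) := swap_even ..
    _ = m a d (m c b (m e h (m g f i))) := by rw [swap_even e f g h i]
    _ = m a d (m e b (m c h (m g f i))) := by rw [swap_odd c b e h]
    _ = m a d (m e b (m g h (m c f i))) := by rw [swap_odd c h g f i]
    _ = m a d (m g b (m e h (m c f i))) := by rw [swap_odd e b g h]
end

section
/- Let G be a set with a totally associative ternary operation [·,·,·] and a querelement map g ↦ ḡ satisfying the Dörnte relations, let V be a vector space over a field K, and let Π^L be a left representation of G on V. Then Π^L(ḡ, g) = id_V for all g, and for all g, u ∈ G: Π^L(g,u) ∘ Π^L(ū, ḡ) = Π^L(ū, ḡ) ∘ Π^L(g,u) = id_V; in particular every operator Π^L(g,u) is invertible with inverse Π^L(ū, ḡ), so any left representation gives a representation of the ternary group by a binary group of invertible operators. -/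
/-!
Composing with `Π^L(g, ḡ) = id` and the Dörnte relations shows that `Π^L(ḡ, g)`,
`Π^L(g,u) Π^L(ū,ḡ)` and `Π^L(ū,ḡ) Π^L(g,u)` collapse to `Π^L(x, x̄)` or `Π^L(x̄, x)`
for suitable `x`, since `[ḡ g g] = g`, `[g u ū] = g` and `[ū ḡ g] = ū`.
-/

section TernaryRepresentation

variable {G M : Type*} [Monoid M] {m : G → G → G → G} {bar : G → G} {P : G → G → M}

theorem rep_bar_self (hrep : ∀ a b c d : G, P a b * P c d = P (m a b c) d)
    (hunit : ∀ g : G, P g (bar g) = 1) (hdorn : ∀ g : G, m (bar g) g g = g) (g : G) :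
    P (bar g) g = 1 :=
  calc P (bar g) g = P (bar g) g * P g (bar g) := by rw [hunit, mul_one]
    _ = P g (bar g) := by rw [hrep, hdorn]
    _ = 1 := hunit g

theorem rep_mul_rep_bar_bar (hrep : ∀ a b c d : G, P a b * P c d = P (m a b c) d)
    (hunit : ∀ g : G, P g (bar g) = 1) (hdorn : ∀ g u : G, m g u (bar u) = g) (g u : G) :
    P g u * P (bar u) (bar g) = 1 := by
  rw [hrep, hdorn, hunit]

theorem rep_bar_bar_mul_rep (hrep : ∀ a b c d : G, P a b * P c d = P (m a b c) d)
    (hunit' : ∀ g : G, P (bar g) g = 1) (hdorn : ∀ g u : G, m (bar u) (bar g) g = bar u)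
    (g u : G) : P (bar u) (bar g) * P g u = 1 := by
  rw [hrep, hdorn, hunit']

end TernaryRepresentation

theorem left_representation_invertible_general {G : Type*} (K : Type*) [Field K]
    (V : Type*) [AddCommGroup V] [Module K V]
    (m : G → G → G → G) (bar : G → G)
    (hdorn : ∀ u g : G,
      m u g (bar g) = u ∧ m u (bar g) g = u ∧ m g (bar g) u = u ∧ m (bar g) g u = u)
    (PiL : G → G → Module.End K V)
    (hrep : ∀ g1 g2 g3 g4 : G, PiL g1 g2 * PiL g3 g4 = PiL (m g1 g2 g3) g4)
    (hunit : ∀ g : G, PiL g (bar g) = 1) :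
    (∀ g : G, PiL (bar g) g = 1) ∧
    (∀ g u : G,
      PiL g u * PiL (bar u) (bar g) = 1 ∧
      PiL (bar u) (bar g) * PiL g u = 1 ∧
      IsUnit (PiL g u)) := by
  have hbar : ∀ g : G, PiL (bar g) g = 1 :=
    rep_bar_self hrep hunit fun g => (hdorn g g).2.2.2
  refine ⟨hbar, fun g u => ?_⟩
  have hright := rep_mul_rep_bar_bar hrep hunit (fun g u => (hdorn g u).1) g u
  have hleft := rep_bar_bar_mul_rep hrep hbar (fun g u => (hdorn (bar u) g).2.1) g u
  exact ⟨hright, hleft, isUnit_iff_exists.mpr ⟨_, hright, hleft⟩⟩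

/-- Every left representation `Π^L` of a ternary group satisfies
`Π^L(ḡ, g) = id`, and every operator `Π^L(g,u)` is invertible with two-sided
inverse `Π^L(ū, ḡ)`: any left representation gives a representation of the
ternary group by a binary group of invertible operators. -/
theorem left_representation_invertible {G : Type*} (K : Type*) [Field K]
    (V : Type*) [AddCommGroup V] [Module K V]
    (m : G → G → G → G) (bar : G → G)
    (hassoc : ∀ a b c d e : G,
      m (m a b c) d e = m a (m b c d) e ∧ m a (m b c d) e = m a b (m c d e))
    (hdorn : ∀ u g : G,
      m u g (bar g) = u ∧ m u (bar g) g = u ∧ m g (bar g) u = u ∧ m (bar g) g u = u)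
    (PiL : G → G → Module.End K V)
    (hrep : ∀ g1 g2 g3 g4 : G, PiL g1 g2 * PiL g3 g4 = PiL (m g1 g2 g3) g4)
    (hunit : ∀ g : G, PiL g (bar g) = 1) :
    (∀ g : G, PiL (bar g) g = 1) ∧
    (∀ g u : G,
      PiL g u * PiL (bar u) (bar g) = 1 ∧
      PiL (bar u) (bar g) * PiL g u = 1 ∧
      IsUnit (PiL g u)) :=
  left_representation_invertible_general K V m bar hdorn PiL hrep hunit
end

section
/- Let G be a set with a totally associative and commutative ternary operation [·,·,·] (invariant under all permutations of its three arguments) and a querelement map g ↦ ḡ satisfying the Dörnte relations, and let Π^L be a left representation of G on a K-vector space V. Then Π^L is symmetric: Π^L(g, h) = Π^L(h, g) for all g, h ∈ G. -/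
theorem rep_eq_rep_ternary_querelement {G M : Type*} [MulOneClass M]
    (m : G → G → G → G) (bar : G → G) (PiL : G → G → M)
    (hrep : ∀ g1 g2 g3 g4 : G, PiL g1 g2 * PiL g3 g4 = PiL (m g1 g2 g3) g4)
    (hunit : ∀ g : G, PiL g (bar g) = 1) (g h k : G) :
    PiL g h = PiL (m g h k) (bar k) := by
  rw [← hrep, hunit, mul_one]

theorem left_representation_symmetric_of_commutative_general {G : Type*} (K : Type*)
    [Field K] (V : Type*) [AddCommGroup V] [Module K V]
    (m : G → G → G → G) (bar : G → G)
    (hcomm12 : ∀ a b c : G, m a b c = m b a c)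
    (PiL : G → G → Module.End K V)
    (hrep : ∀ g1 g2 g3 g4 : G, PiL g1 g2 * PiL g3 g4 = PiL (m g1 g2 g3) g4)
    (hunit : ∀ g : G, PiL g (bar g) = 1) :
    ∀ g h : G, PiL g h = PiL h g := by
  intro g h
  rw [rep_eq_rep_ternary_querelement m bar PiL hrep hunit g h g,
    rep_eq_rep_ternary_querelement m bar PiL hrep hunit h g g, hcomm12]

/-- If the ternary group operation is commutative (invariant under all
permutations of its three arguments), then any left representation is
symmetric: `Π^L(g,h) = Π^L(h,g)`. -/
theorem left_representation_symmetric_of_commutative {G : Type*} (K : Type*)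
    [Field K] (V : Type*) [AddCommGroup V] [Module K V]
    (m : G → G → G → G) (bar : G → G)
    (hassoc : ∀ a b c d e : G,
      m (m a b c) d e = m a (m b c d) e ∧ m a (m b c d) e = m a b (m c d e))
    (hcomm12 : ∀ a b c : G, m a b c = m b a c)
    (hcomm23 : ∀ a b c : G, m a b c = m a c b)
    (hdorn : ∀ u g : G,
      m u g (bar g) = u ∧ m u (bar g) g = u ∧ m g (bar g) u = u ∧ m (bar g) g u = u)
    (PiL : G → G → Module.End K V)
    (hrep : ∀ g1 g2 g3 g4 : G, PiL g1 g2 * PiL g3 g4 = PiL (m g1 g2 g3) g4)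
    (hunit : ∀ g : G, PiL g (bar g) = 1) :
    ∀ g h : G, PiL g h = PiL h g :=
  left_representation_symmetric_of_commutative_general K V m bar hcomm12 PiL hrep hunit
end

section
/- Let G be a set with a totally associative and commutative ternary operation [·,·,·] and a querelement map g ↦ ḡ satisfying the Dörnte relations, and let Π^L be a left representation of G on a K-vector space V. Then Π^L is a middle representation: for all g₁,…,g₆ ∈ G, Π^L(g₁,g₂) ∘ Π^L(g₃,g₄) ∘ Π^L(g₅,g₆) = Π^L([g₁g₃g₅], [g₆g₄g₂]), and Π^L(g,h) ∘ Π^L(ḡ,h̄) = Π^L(ḡ,h̄) ∘ Π^L(g,h) = id_V for all g,h ∈ G. Thus every left representation of a commutative ternary group is a middle representation. -/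
/-!
Composing with `Π(c, c̄) = 1` gives the absorption law `Π(a, b) = Π([a b c], c̄)`, so `Π(a, b)`
is determined by the product `[a b c]` for any single `c`. In a commutative ternary group the
products `[[[g₁ g₂ g₃] g₄ g₅] g₆ c]` and `[[g₁ g₃ g₅] [g₆ g₄ g₂] c]` agree, which gives the
triple product formula; the inverse laws follow from the Dörnte relations.
-/

section TernaryOperation

variable {G : Type*} {m : G → G → G → G}

theorem ternary_mul_mul_perm (hassoc : ∀ a b c d e : G, m (m a b c) d e = m a (m b c d) e)
    (hcomm23 : ∀ a b c : G, m a b c = m a c b) (a b c d e : G) :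
    m (m a b c) d e = m (m a c e) d b := by
  calc m (m a b c) d e = m (m a c b) e d := by rw [hcomm23 a b c, hcomm23 _ d e]
    _ = m a (m c b e) d := hassoc ..
    _ = m a (m c e b) d := by rw [hcomm23 c b e]
    _ = m (m a c e) b d := (hassoc ..).symm
    _ = m (m a c e) d b := hcomm23 ..

theorem ternary_mul_mul_mul_perm (hassoc : ∀ a b c d e : G, m (m a b c) d e = m a (m b c d) e)
    (hcomm12 : ∀ a b c : G, m a b c = m b a c) (hcomm23 : ∀ a b c : G, m a b c = m a c b)
    (g₁ g₂ g₃ g₄ g₅ g₆ x : G) :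
    m (m (m g₁ g₂ g₃) g₄ g₅) g₆ x = m (m g₁ g₃ g₅) (m g₆ g₄ g₂) x := by
  rw [ternary_mul_mul_perm hassoc hcomm23 g₁, hassoc, hcomm23 g₄, hcomm12 g₄]

end TernaryOperation

section LeftRepresentation

variable {G M : Type*} [Monoid M] {m : G → G → G → G} {bar : G → G} {PiL : G → G → M}

theorem leftRep_eq_mul_bar (hrep : ∀ g₁ g₂ g₃ g₄ : G, PiL g₁ g₂ * PiL g₃ g₄ = PiL (m g₁ g₂ g₃) g₄)
    (hunit : ∀ g : G, PiL g (bar g) = 1) (a b c : G) : PiL a b = PiL (m a b c) (bar c) := by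
  rw [← hrep, hunit, mul_one]

theorem leftRep_eq_of_mul_eq
    (hrep : ∀ g₁ g₂ g₃ g₄ : G, PiL g₁ g₂ * PiL g₃ g₄ = PiL (m g₁ g₂ g₃) g₄)
    (hunit : ∀ g : G, PiL g (bar g) = 1) {a b a' b' c : G} (h : m a b c = m a' b' c) :
    PiL a b = PiL a' b' := by
  rw [leftRep_eq_mul_bar hrep hunit a b c, h, ← leftRep_eq_mul_bar hrep hunit]

theorem leftRep_bar_self (hrep : ∀ g₁ g₂ g₃ g₄ : G, PiL g₁ g₂ * PiL g₃ g₄ = PiL (m g₁ g₂ g₃) g₄)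
    (hunit : ∀ g : G, PiL g (bar g) = 1) (hbar : ∀ g u : G, m (bar g) g u = u) (g : G) :
    PiL (bar g) g = 1 := by
  rw [leftRep_eq_mul_bar hrep hunit (bar g) g g, hbar, hunit]

end LeftRepresentation

/-- Every left representation of a commutative ternary group is a middle
representation: `Π^L(g₁,g₂) ∘ Π^L(g₃,g₄) ∘ Π^L(g₅,g₆) = Π^L([g₁g₃g₅],[g₆g₄g₂])`
and `Π^L(g,h) ∘ Π^L(ḡ,h̄) = Π^L(ḡ,h̄) ∘ Π^L(g,h) = id`. -/
theorem left_representation_is_middle_of_commutative {G : Type*} (K : Type*)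
    [Field K] (V : Type*) [AddCommGroup V] [Module K V]
    (m : G → G → G → G) (bar : G → G)
    (hassoc : ∀ a b c d e : G,
      m (m a b c) d e = m a (m b c d) e ∧ m a (m b c d) e = m a b (m c d e))
    (hcomm12 : ∀ a b c : G, m a b c = m b a c)
    (hcomm23 : ∀ a b c : G, m a b c = m a c b)
    (hdorn : ∀ u g : G,
      m u g (bar g) = u ∧ m u (bar g) g = u ∧ m g (bar g) u = u ∧ m (bar g) g u = u)
    (PiL : G → G → Module.End K V)
    (hrep : ∀ g1 g2 g3 g4 : G, PiL g1 g2 * PiL g3 g4 = PiL (m g1 g2 g3) g4)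
    (hunit : ∀ g : G, PiL g (bar g) = 1) :
    (∀ g1 g2 g3 g4 g5 g6 : G,
      PiL g1 g2 * PiL g3 g4 * PiL g5 g6 = PiL (m g1 g3 g5) (m g6 g4 g2)) ∧
    (∀ g h : G,
      PiL g h * PiL (bar g) (bar h) = 1 ∧ PiL (bar g) (bar h) * PiL g h = 1) := by
  have hassoc₁ : ∀ a b c d e : G, m (m a b c) d e = m a (m b c d) e :=
    fun a b c d e => (hassoc a b c d e).1
  have hbar : ∀ g u : G, m (bar g) g u = u := fun g u => (hdorn u g).2.2.2
  refine ⟨fun g₁ g₂ g₃ g₄ g₅ g₆ => ?_, fun g h => ⟨?_, ?_⟩⟩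
  · rw [hrep, hrep]
    exact leftRep_eq_of_mul_eq hrep hunit
      (ternary_mul_mul_mul_perm hassoc₁ hcomm12 hcomm23 g₁ g₂ g₃ g₄ g₅ g₆ g₁)
  · rw [hrep, hcomm23, (hdorn h g).2.2.1, hunit]
  · rw [hrep, hcomm23, hbar, leftRep_bar_self hrep hunit hbar]
end

section
/- Let (G, ·) be a group with identity e, and regard G as the derived ternary group with ternary product [ghu] = g·h·u, whose querelement map is ḡ = g⁻¹. Let V be a K-vector space. (i) If π : G → End_K(V) satisfies π(g·h) = π(g) ∘ π(h) and π(e) = id_V, then Π^L(g,h) := π(g) ∘ π(h) is a left representation of the derived ternary group: Π^L(g₁,g₂) ∘ Π^L(g₃,g₄) = Π^L(g₁·g₂·g₃, g₄) and Π^L(g, g⁻¹) = id_V. (ii) Conversely, if Π^L is any left representation of the derived ternary group, then π(g) := Π^L(g, e) satisfies π(g·h) = π(g) ∘ π(h), π(e) = id_V, and Π^L(g,h) = π(g) ∘ π(h) for all g, h ∈ G. Thus there is a one-to-one correspondence between representations of (G,·) and left representations of der(G,·). -/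
/-!
Both directions are specialisations of the composition law of a left representation:
putting `g₂ = e` makes `g ↦ Π^L(g, e)` multiplicative, and putting `g₃ = g₄ = e` gives
`Π^L(g, h) = Π^L(g·h, e)`; the querelement condition at `g = e` gives `Π^L(e, e) = id`.
-/

section FromRepresentation

variable {G M : Type*}

def derivedLeftRep [Mul M] (π : G → M) (g h : G) : M :=
  π g * π h

theorem derivedLeftRep_mul_derivedLeftRep [Mul G] [Semigroup M] {π : G → M}
    (hmul : ∀ g h, π (g * h) = π g * π h) (g₁ g₂ g₃ g₄ : G) :
    derivedLeftRep π g₁ g₂ * derivedLeftRep π g₃ g₄ = derivedLeftRep π (g₁ * g₂ * g₃) g₄ := by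
  simp only [derivedLeftRep, hmul, mul_assoc]

theorem derivedLeftRep_self_inv [Group G] [Monoid M] {π : G → M}
    (hmul : ∀ g h, π (g * h) = π g * π h) (hone : π 1 = 1) (g : G) :
    derivedLeftRep π g g⁻¹ = 1 := by
  rw [derivedLeftRep, ← hmul, mul_inv_cancel, hone]

end FromRepresentation

section ToRepresentation

variable {G M : Type*} [Monoid M]

theorem leftRep_one_one_of_self_inv [Group G] {PiL : G → G → M}
    (hquer : ∀ g, PiL g g⁻¹ = 1) : PiL 1 1 = 1 := by
  simpa using hquer 1

theorem leftRep_mul_one [MulOneClass G] {PiL : G → G → M}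
    (hcomp : ∀ g₁ g₂ g₃ g₄, PiL g₁ g₂ * PiL g₃ g₄ = PiL (g₁ * g₂ * g₃) g₄) (g h : G) :
    PiL (g * h) 1 = PiL g 1 * PiL h 1 := by
  simpa using (hcomp g 1 h 1).symm

theorem leftRep_eq_leftRep_mul_one [MulOneClass G] {PiL : G → G → M}
    (hcomp : ∀ g₁ g₂ g₃ g₄, PiL g₁ g₂ * PiL g₃ g₄ = PiL (g₁ * g₂ * g₃) g₄)
    (hone : PiL 1 1 = 1) (g h : G) :
    PiL g h = PiL (g * h) 1 := by
  simpa [hone] using hcomp g h 1 1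

end ToRepresentation

/-- One-to-one correspondence between representations of a binary group
`(G,·)` and left representations of the derived ternary group `der(G,·)` with
`[ghu] = g·h·u` and `ḡ = g⁻¹`:
(i) if `π` is a representation of `(G,·)` then `Π^L(g,h) := π(g) ∘ π(h)` is a
left representation of `der(G,·)`;
(ii) conversely, if `Π^L` is a left representation of `der(G,·)` then
`π(g) := Π^L(g,e)` is a representation of `(G,·)` and
`Π^L(g,h) = π(g) ∘ π(h)`. -/
theorem derived_ternary_left_representation_correspondence
    {G : Type*} [Group G] (K : Type*) [Field K]
    (V : Type*) [AddCommGroup V] [Module K V] :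
    (∀ π : G → Module.End K V,
      (∀ g h : G, π (g * h) = π g * π h) → π 1 = 1 →
        (∀ g1 g2 g3 g4 : G,
          (π g1 * π g2) * (π g3 * π g4) = (π (g1 * g2 * g3)) * π g4) ∧
        (∀ g : G, π g * π g⁻¹ = 1)) ∧
    (∀ PiL : G → G → Module.End K V,
      (∀ g1 g2 g3 g4 : G, PiL g1 g2 * PiL g3 g4 = PiL (g1 * g2 * g3) g4) →
      (∀ g : G, PiL g g⁻¹ = 1) →
        (∀ g h : G, PiL (g * h) 1 = PiL g 1 * PiL h 1) ∧
        PiL 1 1 = 1 ∧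
        (∀ g h : G, PiL g h = PiL g 1 * PiL h 1)) := by
  refine ⟨fun π hmul hone => ⟨derivedLeftRep_mul_derivedLeftRep hmul,
    derivedLeftRep_self_inv hmul hone⟩, fun PiL hcomp hquer => ?_⟩
  have hone : PiL 1 1 = 1 := leftRep_one_one_of_self_inv hquer
  exact ⟨leftRep_mul_one hcomp, hone, fun g h =>
    (leftRep_eq_leftRep_mul_one hcomp hone g h).trans (leftRep_mul_one hcomp g h)⟩
end

section
/- Let G be a set with a totally associative ternary operation [·,·,·] and a querelement map g ↦ ḡ satisfying the Dörnte relations, let V be a finite-dimensional vector space over a field K, and let Π^M be a middle representation of G on V. If a = [g a′ ḡ] and b = [h b′ h̄] for some g, h ∈ G (i.e. (a,b) is conjugate-equivalent to (a′,b′)), then the traces agree: tr Π^M(a, b) = tr Π^M(a′, b′). -/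
/-!
Conjugation by `g` in the first slot and by `h` in the second is realised inside the
representation: `Π(g a' ḡ, h b' h̄) = Π(g, h̄) Π(a', b') Π(ḡ, h)`, and the Dörnte relations
make `Π(ḡ, h)` a left inverse of `Π(g, h̄)`. The trace is then invariant by `tr (XYZ) = tr (ZXY)`.
-/

theorem middle_rep_bar_mul_eq_one {G M : Type*} [Monoid M] {m : G → G → G → G}
    {bar : G → G} {Pi : G → G → M}
    (hrep : ∀ g3 h3 g2 h2 g1 h1 : G,
      Pi g3 h3 * Pi g2 h2 * Pi g1 h1 = Pi (m g3 g2 g1) (m h1 h2 h3))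
    (hleft : ∀ g u : G, m (bar g) g u = u) (hmid : ∀ u g : G, m u (bar g) g = u)
    {g h : G} (hunit : IsUnit (Pi g h)) :
    Pi (bar g) h * Pi g (bar h) = 1 :=
  hunit.mul_eq_right.mp (by rw [hrep, hleft, hmid])

theorem middle_representation_trace_invariant_general {G : Type*} (K : Type*)
    [Field K] (V : Type*) [AddCommGroup V] [Module K V] [FiniteDimensional K V]
    (m : G → G → G → G) (bar : G → G)
    (hdorn : ∀ u g : G,
      m u g (bar g) = u ∧ m u (bar g) g = u ∧ m g (bar g) u = u ∧ m (bar g) g u = u)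
    (PiM : G → G → Module.End K V)
    (hrep : ∀ g3 h3 g2 h2 g1 h1 : G,
      PiM g3 h3 * PiM g2 h2 * PiM g1 h1 = PiM (m g3 g2 g1) (m h1 h2 h3))
    (hinv : ∀ g h : G,
      PiM g h * PiM (bar g) (bar h) = 1 ∧ PiM (bar g) (bar h) * PiM g h = 1) :
    ∀ a b a' b' g h : G, a = m g a' (bar g) → b = m h b' (bar h) →
      LinearMap.trace K V (PiM a b) = LinearMap.trace K V (PiM a' b') := by
  rintro a b a' b' g h rfl rfl
  have hunit : IsUnit (PiM g h) := ⟨⟨_, _, (hinv g h).1, (hinv g h).2⟩, rfl⟩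
  have hcancel : PiM (bar g) h * PiM g (bar h) = 1 :=
    middle_rep_bar_mul_eq_one hrep (fun g u => (hdorn u g).2.2.2)
      (fun u g => (hdorn u g).2.1) hunit
  rw [← hrep, LinearMap.trace_mul_cycle, hcancel, one_mul]

/-- For a middle representation `Π^M` of a ternary group on a
finite-dimensional vector space, conjugate-equivalent pairs have equal traces:
if `a = [g a′ ḡ]` and `b = [h b′ h̄]` then
`tr Π^M(a,b) = tr Π^M(a′,b′)`. -/
theorem middle_representation_trace_invariant {G : Type*} (K : Type*)
    [Field K] (V : Type*) [AddCommGroup V] [Module K V] [FiniteDimensional K V]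
    (m : G → G → G → G) (bar : G → G)
    (hassoc : ∀ a b c d e : G,
      m (m a b c) d e = m a (m b c d) e ∧ m a (m b c d) e = m a b (m c d e))
    (hdorn : ∀ u g : G,
      m u g (bar g) = u ∧ m u (bar g) g = u ∧ m g (bar g) u = u ∧ m (bar g) g u = u)
    (PiM : G → G → Module.End K V)
    (hrep : ∀ g3 h3 g2 h2 g1 h1 : G,
      PiM g3 h3 * PiM g2 h2 * PiM g1 h1 = PiM (m g3 g2 g1) (m h1 h2 h3))
    (hinv : ∀ g h : G,
      PiM g h * PiM (bar g) (bar h) = 1 ∧ PiM (bar g) (bar h) * PiM g h = 1) :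
    ∀ a b a' b' g h : G, a = m g a' (bar g) → b = m h b' (bar h) →
      LinearMap.trace K V (PiM a b) = LinearMap.trace K V (PiM a' b') :=
  middle_representation_trace_invariant_general K V m bar hdorn PiM hrep hinv
end

section
/- Let G be a set with a totally associative ternary operation [·,·,·] and a querelement map g ↦ ḡ satisfying the Dörnte relations, fix a ∈ G, and let ρ : G → End_K(V) be a representation of the binary retract ret_a(G,[ ]) (whose multiplication is g ∗ h = [g a h] and whose identity is ā), i.e. ρ([g a h]) = ρ(g) ∘ ρ(h) for all g, h ∈ G and ρ(ā) = id_V. Then Π^L(g, h) := ρ(g) ∘ ρ([ā h ā]) is a left representation of the ternary group G: Π^L(g₁,g₂) ∘ Π^L(g₃,g₄) = Π^L([g₁g₂g₃], g₄) for all g₁,…,g₄ ∈ G and Π^L(g, ḡ) = id_V for all g ∈ G. (This gives the correspondence between binary representations of the retract and left representations of the ternary group.) -/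
/-! Inside the ternary product, the letters `a ā` (in either order) can be inserted or
deleted, because `[x a ā] = x` and `[ā a z] = z`. Hence a product `g ∗ h = [g a h]` of the
retract with a factor `[ā h ā]` collapses, and
`ρ g₁ ρ[ā g₂ ā] ρ g₃ = ρ [g₁ a [[ā g₂ ā] a g₃]] = ρ [g₁ g₂ g₃]`, which is the composition law;
the unit law is the case `ρ g ρ[ā ḡ ā] = ρ [g ḡ ā] = ρ ā = 1`. -/

namespace TernaryGroup

variable {G : Type*}

def TotallyAssociative (m : G → G → G → G) : Prop :=
  ∀ a b c d e : G, m (m a b c) d e = m a (m b c d) e ∧ m a (m b c d) e = m a b (m c d e)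

def IsQuerelement (m : G → G → G → G) (bar : G → G) : Prop :=
  ∀ u g : G, m u g (bar g) = u ∧ m u (bar g) g = u ∧ m g (bar g) u = u ∧ m (bar g) g u = u

variable {m : G → G → G → G} {bar : G → G}

theorem TotallyAssociative.outer (hassoc : TotallyAssociative m) (a b c d e : G) :
    m (m a b c) d e = m a b (m c d e) :=
  (hassoc a b c d e).1.trans (hassoc a b c d e).2

theorem absorb_a_bar (hassoc : TotallyAssociative m) (hdorn : IsQuerelement m bar)
    (a x y z : G) : m x a (m (bar a) y z) = m x y z := by
  rw [← hassoc.outer, (hdorn x a).1]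

theorem absorb_bar_a (hassoc : TotallyAssociative m) (hdorn : IsQuerelement m bar)
    (a x y z : G) : m (m x y (bar a)) a z = m x y z := by
  rw [hassoc.outer, (hdorn z a).2.2.2]

section Retract

variable {M : Type*} [Monoid M] {a : G} {ρ : G → M}

theorem retractHom_mul_sandwich (hassoc : TotallyAssociative m) (hdorn : IsQuerelement m bar)
    (hρ : ∀ g h : G, ρ (m g a h) = ρ g * ρ h) (g₁ g₂ g₃ : G) :
    ρ g₁ * ρ (m (bar a) g₂ (bar a)) * ρ g₃ = ρ (m g₁ g₂ g₃) := by
  rw [mul_assoc, ← hρ, ← hρ, absorb_bar_a hassoc hdorn, absorb_a_bar hassoc hdorn]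

theorem retractHom_mul_sandwich_bar (hassoc : TotallyAssociative m)
    (hdorn : IsQuerelement m bar) (hρ : ∀ g h : G, ρ (m g a h) = ρ g * ρ h)
    (hρ1 : ρ (bar a) = 1) (g : G) :
    ρ g * ρ (m (bar a) (bar g) (bar a)) = 1 := by
  rw [← hρ, absorb_a_bar hassoc hdorn, (hdorn (bar a) g).2.2.1, hρ1]

end Retract

end TernaryGroup

/-- From a binary representation `ρ` of the retract `ret_a(G,[ ])` (with
multiplication `g ∗ h = [g a h]` and identity `ā`) one obtains a left
representation of the ternary group by `Π^L(g,h) := ρ(g) ∘ ρ([ā h ā])`. -/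
theorem retract_representation_gives_left_representation {G : Type*}
    (K : Type*) [Field K] (V : Type*) [AddCommGroup V] [Module K V]
    (m : G → G → G → G) (bar : G → G)
    (hassoc : ∀ a b c d e : G,
      m (m a b c) d e = m a (m b c d) e ∧ m a (m b c d) e = m a b (m c d e))
    (hdorn : ∀ u g : G,
      m u g (bar g) = u ∧ m u (bar g) g = u ∧ m g (bar g) u = u ∧ m (bar g) g u = u)
    (a : G) (ρ : G → Module.End K V)
    (hρ : ∀ g h : G, ρ (m g a h) = ρ g * ρ h)
    (hρ1 : ρ (bar a) = 1) :
    (∀ g1 g2 g3 g4 : G,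
      (ρ g1 * ρ (m (bar a) g2 (bar a))) * (ρ g3 * ρ (m (bar a) g4 (bar a))) =
        ρ (m g1 g2 g3) * ρ (m (bar a) g4 (bar a))) ∧
    (∀ g : G, ρ g * ρ (m (bar a) (bar g) (bar a)) = 1) := by
  refine ⟨fun g1 g2 g3 g4 => ?_, TernaryGroup.retractHom_mul_sandwich_bar hassoc hdorn hρ hρ1⟩
  rw [← mul_assoc, TernaryGroup.retractHom_mul_sandwich hassoc hdorn hρ]
end
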